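/- arXiv:1307.0346 — 7 statements merged into one kernel-verified Lean document; each statement's English description precedes it below -/
import Mathlib

section
/- The function φ(u,s) = (√(1 − u + s²) + s)/(1 − u), defined on the open set {(u,s) ∈ ℝ² : u < 1 and 1 − u + s² > 0}, satisfies the projective PDE (∗): φ₂₂ = 2(φ₁ − s·φ₁₂). -/
/-!
With `R = √(1 - u + s²)`, the identity `R² - s² = 1 - u` collapses the second `s`-derivative
to `φ₂₂ = R⁻³`, and the same identity reduces `2(φ₁ - s φ₁₂)` to `(R² - s²) / (R³ (1 - u)) = R⁻³`.
-/

/-- First partial derivative of `f = f(u,s)` with respect to `u`. -/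
noncomputable def pd1 (f : ℝ → ℝ → ℝ) (u s : ℝ) : ℝ := deriv (fun t => f t s) u

/-- First partial derivative of `f = f(u,s)` with respect to `s`. -/
noncomputable def pd2 (f : ℝ → ℝ → ℝ) (u s : ℝ) : ℝ := deriv (f u) s

/-- The defining function of a Randers metric in navigation form. -/
noncomputable def phi (u s : ℝ) : ℝ := (Real.sqrt (1 - u + s ^ 2) + s) / (1 - u)

open Filter Topology

section Derivatives

variable {u s : ℝ}

lemma hasDerivAt_sqrt_one_sub_add_sq_right (h : 0 < 1 - u + s ^ 2) :
    HasDerivAt (fun x => √(1 - u + x ^ 2)) (s / √(1 - u + s ^ 2)) s := by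
  have hA : HasDerivAt (fun x : ℝ => 1 - u + x ^ 2) (2 * s) s := by
    simpa using (hasDerivAt_pow 2 s).const_add (1 - u)
  refine ((Real.hasDerivAt_sqrt h.ne').comp s hA).congr_deriv ?_
  have := (Real.sqrt_pos.2 h).ne'
  field_simp

lemma hasDerivAt_sqrt_one_sub_add_sq_left (h : 0 < 1 - u + s ^ 2) :
    HasDerivAt (fun t => √(1 - t + s ^ 2)) (-(2 * √(1 - u + s ^ 2))⁻¹) u := by
  have hA : HasDerivAt (fun t : ℝ => 1 - t + s ^ 2) (-1) u := by
    simpa using ((hasDerivAt_id u).const_sub 1).add_const (s ^ 2)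
  refine ((Real.hasDerivAt_sqrt h.ne').comp u hA).congr_deriv ?_
  ring

lemma eventually_pos_one_sub_add_sq (h : 0 < 1 - u + s ^ 2) :
    ∀ᶠ x in 𝓝 s, 0 < 1 - u + x ^ 2 :=
  continuousAt_const.eventually_lt (by fun_prop) h

lemma pd2_phi_eq (h : 0 < 1 - u + s ^ 2) :
    pd2 phi u s = (1 + s / √(1 - u + s ^ 2)) / (1 - u) := by
  have H : HasDerivAt (fun x => (√(1 - u + x ^ 2) + x) / (1 - u))
      ((1 + s / √(1 - u + s ^ 2)) / (1 - u)) s := by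
    refine (((hasDerivAt_sqrt_one_sub_add_sq_right h).add (hasDerivAt_id' s)).div_const
      (1 - u)).congr_deriv ?_
    rw [add_comm]
  exact H.deriv

lemma pd1_phi_eq (hu : u ≠ 1) (h : 0 < 1 - u + s ^ 2) :
    pd1 phi u s = (√(1 - u + s ^ 2) + s) / (1 - u) ^ 2 - (√(1 - u + s ^ 2))⁻¹ / (2 * (1 - u)) := by
  have hu' : 1 - u ≠ 0 := sub_ne_zero.2 hu.symm
  have hR := (Real.sqrt_pos.2 h).ne'
  have H : HasDerivAt (fun t => (√(1 - t + s ^ 2) + s) / (1 - t))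
      ((√(1 - u + s ^ 2) + s) / (1 - u) ^ 2 - (√(1 - u + s ^ 2))⁻¹ / (2 * (1 - u))) u := by
    refine (((hasDerivAt_sqrt_one_sub_add_sq_left h).add_const s).div
      ((hasDerivAt_id' u).const_sub 1) hu').congr_deriv ?_
    field_simp
    ring
  exact H.deriv

lemma pd2_pd2_phi_eq (hu : u ≠ 1) (h : 0 < 1 - u + s ^ 2) :
    pd2 (pd2 phi) u s = 1 / √(1 - u + s ^ 2) ^ 3 := by
  have hu' : 1 - u ≠ 0 := sub_ne_zero.2 hu.symm
  have hR := (Real.sqrt_pos.2 h).ne'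
  have H : HasDerivAt (fun x => (1 + x / √(1 - u + x ^ 2)) / (1 - u))
      (1 / √(1 - u + s ^ 2) ^ 3) s := by
    refine ((((hasDerivAt_id' s).div (hasDerivAt_sqrt_one_sub_add_sq_right h) hR).const_add
      1).div_const (1 - u)).congr_deriv ?_
    field_simp
    linear_combination Real.sq_sqrt h.le
  exact (H.congr_of_eventuallyEq
    ((eventually_pos_one_sub_add_sq h).mono fun x hx => pd2_phi_eq hx)).deriv

lemma pd2_pd1_phi_eq (hu : u ≠ 1) (h : 0 < 1 - u + s ^ 2) :
    pd2 (pd1 phi) u s =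
      (1 + s / √(1 - u + s ^ 2)) / (1 - u) ^ 2 + s / (2 * √(1 - u + s ^ 2) ^ 3 * (1 - u)) := by
  have hu' : 1 - u ≠ 0 := sub_ne_zero.2 hu.symm
  have hR := (Real.sqrt_pos.2 h).ne'
  have hsqrt := hasDerivAt_sqrt_one_sub_add_sq_right h
  have H : HasDerivAt
      (fun x => (√(1 - u + x ^ 2) + x) / (1 - u) ^ 2 - (√(1 - u + x ^ 2))⁻¹ / (2 * (1 - u)))
      ((1 + s / √(1 - u + s ^ 2)) / (1 - u) ^ 2 + s / (2 * √(1 - u + s ^ 2) ^ 3 * (1 - u))) s := by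
    refine (((hsqrt.add (hasDerivAt_id' s)).div_const ((1 - u) ^ 2)).sub
      ((hsqrt.inv hR).div_const (2 * (1 - u)))).congr_deriv ?_
    field_simp
    ring
  exact (H.congr_of_eventuallyEq
    ((eventually_pos_one_sub_add_sq h).mono fun x hx => pd1_phi_eq hu hx)).deriv

end Derivatives

/-- `φ(u,s) = (√(1 − u + s²) + s)/(1 − u)` satisfies the projective PDE
`φ₂₂ = 2(φ₁ − s·φ₁₂)` on `{(u,s) : u < 1, 1 − u + s² > 0}`. -/
theorem stmt_1 : ∀ u s : ℝ, u < 1 → 0 < 1 - u + s ^ 2 →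
    pd2 (pd2 phi) u s = 2 * (pd1 phi u s - s * pd2 (pd1 phi) u s) := by
  intro u s hu h
  have hu' : 1 - u ≠ 0 := by linarith
  have hR := (Real.sqrt_pos.2 h).ne'
  have hR2 : √(1 - u + s ^ 2) ^ 2 = 1 - u + s ^ 2 := Real.sq_sqrt h.le
  rw [pd2_pd2_phi_eq hu.ne h, pd1_phi_eq hu.ne h, pd2_pd1_phi_eq hu.ne h]
  field_simp
  linear_combination (u - 1 - 2 * √(1 - u + s ^ 2) ^ 2) * hR2
end

section
/- Let φ(u,s) = (√(1 − u + s²) + s)/(1 − u) on the open set {(u,s) ∈ ℝ² : 0 ≤ s² ≤ u < 1} (where φ > 0), and set ψ := (φ₂ + 2s·φ₁)/(2φ). Then ψ² − (ψ₂ + 2s·ψ₁) = −(1/4)·φ². Equivalently, φ satisfies the Einstein PDE (∗∗) with μ = 0 and κ = −4K for every real K. -/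
/-- `ψ := (φ₂ + 2s·φ₁)/(2φ)`. -/
noncomputable def psi (f : ℝ → ℝ → ℝ) (u s : ℝ) : ℝ :=
  (pd2 f u s + 2 * s * pd1 f u s) / (2 * f u s)

/-!
The function `φ` solves the transport equation `φ₂ + 2s·φ₁ = φ²` on the half-plane `u < 1`.
Hence `ψ = φ/2` there, so `ψ₂ + 2s·ψ₁ = (φ₂ + 2s·φ₁)/2 = φ²/2`, and
`ψ² − (ψ₂ + 2s·ψ₁) = φ²/4 − φ²/2 = −φ²/4`.
-/

section Transport

variable {f : ℝ → ℝ → ℝ}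

theorem psi_eq_half_of_transport {u s : ℝ} (hf : f u s ≠ 0)
    (htr : pd2 f u s + 2 * s * pd1 f u s = f u s ^ 2) : psi f u s = f u s / 2 := by
  rw [psi, htr]
  field_simp

variable (hf : ∀ t x, t < 1 → f t x ≠ 0)
  (htr : ∀ t x, t < 1 → pd2 f t x + 2 * x * pd1 f t x = f t x ^ 2)
include hf htr

theorem pd1_psi_of_transport {u : ℝ} (s : ℝ) (hu : u < 1) :
    pd1 (psi f) u s = pd1 f u s / 2 := by
  have hev : (fun t => psi f t s) =ᶠ[nhds u] fun t => f t s / 2 := by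
    filter_upwards [Iio_mem_nhds hu] with t ht
    exact psi_eq_half_of_transport (hf t s ht) (htr t s ht)
  rw [pd1, hev.deriv_eq, deriv_div_const, pd1]

theorem pd2_psi_of_transport {u : ℝ} (s : ℝ) (hu : u < 1) :
    pd2 (psi f) u s = pd2 f u s / 2 := by
  have hfun : psi f u = fun x => f u x / 2 :=
    funext fun x => psi_eq_half_of_transport (hf u x hu) (htr u x hu)
  rw [pd2, hfun, deriv_div_const, pd2]

theorem psi_sq_sub_transport_of_transport {u : ℝ} (s : ℝ) (hu : u < 1) :
    psi f u s ^ 2 - (pd2 (psi f) u s + 2 * s * pd1 (psi f) u s) = -(1 / 4) * f u s ^ 2 := by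
  rw [pd1_psi_of_transport hf htr s hu, pd2_psi_of_transport hf htr s hu,
    psi_eq_half_of_transport (hf u s hu) (htr u s hu)]
  linear_combination (-1 / 2 : ℝ) * htr u s hu

end Transport

section Phi

variable {u : ℝ} (s : ℝ)

theorem one_sub_add_sq_pos (hu : u < 1) : 0 < 1 - u + s ^ 2 := by
  nlinarith [sq_nonneg s]

theorem neg_lt_sqrt_one_sub_add_sq (hu : u < 1) : -s < Real.sqrt (1 - u + s ^ 2) := by
  calc -s ≤ |s| := neg_le_abs s
    _ = Real.sqrt (s ^ 2) := (Real.sqrt_sq_eq_abs s).symm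
    _ < Real.sqrt (1 - u + s ^ 2) := Real.sqrt_lt_sqrt (sq_nonneg s) (by linarith)

theorem phi_pos (hu : u < 1) : 0 < phi u s :=
  div_pos (by linarith [neg_lt_sqrt_one_sub_add_sq s hu]) (by linarith)

theorem hasDerivAt_phi_fst (hu : u < 1) :
    HasDerivAt (fun t => phi t s)
      ((1 / (2 * Real.sqrt (1 - u + s ^ 2)) * (-1) * (1 - u)
        - (Real.sqrt (1 - u + s ^ 2) + s) * (-1)) / (1 - u) ^ 2) u := by
  have hlin : HasDerivAt (fun t : ℝ => 1 - t) (-1) u := by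
    simpa using (hasDerivAt_id u).const_sub 1
  have hsqrt := (Real.hasDerivAt_sqrt (one_sub_add_sq_pos s hu).ne').comp u
    (hlin.add_const (s ^ 2))
  exact (hsqrt.add_const s).div hlin (by linarith)

theorem hasDerivAt_phi_snd (hu : u < 1) :
    HasDerivAt (phi u)
      ((1 / (2 * Real.sqrt (1 - u + s ^ 2)) * (2 * s) + 1) / (1 - u)) s := by
  have hsq : HasDerivAt (fun x : ℝ => 1 - u + x ^ 2) (2 * s) s := by
    simpa using (hasDerivAt_pow 2 s).const_add (1 - u)
  have hsqrt := (Real.hasDerivAt_sqrt (one_sub_add_sq_pos s hu).ne').comp s hsq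
  exact (hsqrt.add (hasDerivAt_id s)).div_const (1 - u)

theorem phi_transport (hu : u < 1) :
    pd2 phi u s + 2 * s * pd1 phi u s = phi u s ^ 2 := by
  rw [pd1, pd2, (hasDerivAt_phi_fst s hu).deriv, (hasDerivAt_phi_snd s hu).deriv, phi]
  have hr : 0 < Real.sqrt (1 - u + s ^ 2) := Real.sqrt_pos.mpr (one_sub_add_sq_pos s hu)
  have hr2 : Real.sqrt (1 - u + s ^ 2) ^ 2 = 1 - u + s ^ 2 :=
    Real.sq_sqrt (one_sub_add_sq_pos s hu).le
  have h1u : 1 - u ≠ 0 := by linarith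
  field_simp
  linear_combination -Real.sqrt (1 - u + s ^ 2) * hr2

end Phi

/-- For `φ(u,s) = (√(1 − u + s²) + s)/(1 − u)` on `{0 ≤ s² ≤ u < 1}`, with
`ψ := (φ₂ + 2s·φ₁)/(2φ)`, one has `ψ² − (ψ₂ + 2s·ψ₁) = −(1/4)·φ²`; equivalently,
φ satisfies the Einstein PDE (∗∗) with `μ = 0` and `κ = −4K` for every real `K`. -/
theorem stmt_3 : ∀ u s : ℝ, s ^ 2 ≤ u → u < 1 →
    ((psi phi u s) ^ 2 - (pd2 (psi phi) u s + 2 * s * pd1 (psi phi) u s)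
        = -(1/4) * (phi u s) ^ 2
      ∧ ∀ K : ℝ, (-4 * K - 0 * u) *
          ((psi phi u s) ^ 2 - (pd2 (psi phi) u s + 2 * s * pd1 (psi phi) u s))
          + 0 * s * psi phi u s + 0 = K * (phi u s) ^ 2) := by
  intro u s _ hu
  have key := psi_sq_sub_transport_of_transport (fun t x ht => (phi_pos x ht).ne')
    (fun t x ht => phi_transport x ht) s hu
  exact ⟨key, fun K => by rw [key]; ring⟩
end

section
/- Let φ = φ(u,s) be a positive smooth function of two real variables and let Φ = Φ(u,v) be defined by φ(u,s) = Φ(u − s², s) (the change of variables u = b² − s², v = s). Set ψ := (φ₂ + 2s·φ₁)/(2φ) and W := 1/√Φ. Then for real constants κ and K, the equation κ·[ψ² − (ψ₂ + 2s·ψ₁)] = K·φ² holds (i.e., the Einstein PDE (∗∗) with μ = 0) if and only if κ·W_vv − K·W^{−3} = 0. -/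
open Real

lemma pd1_eq' (F : ℝ → ℝ → ℝ) (hF : Differentiable ℝ (fun p : ℝ × ℝ => F p.1 p.2)) (u s : ℝ) :
    HasDerivAt (fun t => F t s) (fderiv ℝ (fun p : ℝ × ℝ => F p.1 p.2) (u, s) (1, 0)) u := by
  have h := (hF (u, s)).hasFDerivAt
  have hc : HasDerivAt (fun t : ℝ => (t, s)) ((1 : ℝ), (0 : ℝ)) u :=
    (hasDerivAt_id u).prodMk (hasDerivAt_const u s)
  exact h.comp_hasDerivAt u hc

lemma pd2_eq' (F : ℝ → ℝ → ℝ) (hF : Differentiable ℝ (fun p : ℝ × ℝ => F p.1 p.2)) (u s : ℝ) :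
    HasDerivAt (fun t => F u t) (fderiv ℝ (fun p : ℝ × ℝ => F p.1 p.2) (u, s) (0, 1)) s := by
  have h := (hF (u, s)).hasFDerivAt
  have hc : HasDerivAt (fun t : ℝ => (u, t)) ((0 : ℝ), (1 : ℝ)) s :=
    (hasDerivAt_const s u).prodMk (hasDerivAt_id s)
  exact h.comp_hasDerivAt s hc

/-- Key chain rule: the transport operator `∂₂ + 2s∂₁` is a v-derivative in new variables. -/
lemma lemA (F : ℝ → ℝ → ℝ) (hF : Differentiable ℝ (fun p : ℝ × ℝ => F p.1 p.2)) (u s : ℝ) :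
    deriv (fun v => F (u - s ^ 2 + v ^ 2) v) s = pd2 F u s + 2 * s * pd1 F u s := by
  have hc1 : HasDerivAt (fun v : ℝ => u - s ^ 2 + v ^ 2) (2 * s) s := by
    simpa using (hasDerivAt_pow 2 s).const_add (u - s ^ 2)
  have hc : HasDerivAt (fun v : ℝ => (u - s ^ 2 + v ^ 2, v)) ((2 * s : ℝ), (1 : ℝ)) s :=
    hc1.prodMk (hasDerivAt_id s)
  have h' := (hF ((u : ℝ), s)).hasFDerivAt
  have h2 := h'.comp_hasDerivAt_of_eq s hc (by show ((u:ℝ), s) = (u - s^2 + s^2, s); rw [Prod.ext_iff]; exact ⟨by ring, rfl⟩)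
  have h3 : HasDerivAt (fun v => F (u - s ^ 2 + v ^ 2) v)
      (fderiv ℝ (fun p : ℝ × ℝ => F p.1 p.2) (u, s) ((2 * s : ℝ), (1 : ℝ))) s := h2
  rw [h3.deriv]
  have e : ((2 * s : ℝ), (1 : ℝ)) = (2 * s) • ((1:ℝ), (0:ℝ)) + ((0:ℝ), (1:ℝ)) := by
    simp [Prod.ext_iff]
  rw [e, map_add, map_smul]
  rw [pd1, pd2, (pd1_eq' F hF u s).deriv, (pd2_eq' F hF u s).deriv]
  simp [smul_eq_mul]; ring

/-- The slice function `H φ x = fun w => φ (x + w²) w`. -/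
noncomputable def HH (φ : ℝ → ℝ → ℝ) (x w : ℝ) : ℝ := φ (x + w ^ 2) w

section aux
variable (φ : ℝ → ℝ → ℝ)

lemma HH_smooth (hφ : ContDiff ℝ (⊤ : ℕ∞) (fun p : ℝ × ℝ => φ p.1 p.2)) (x : ℝ) :
    ContDiff ℝ (⊤ : ℕ∞) (HH φ x) := by
  have hc : ContDiff ℝ (⊤ : ℕ∞) (fun w : ℝ => ((x + w ^ 2 : ℝ), w)) :=
    (contDiff_const.add (contDiff_id.pow 2)).prodMk contDiff_id
  exact hφ.comp hc

lemma psi_smooth (hφ : ContDiff ℝ (⊤ : ℕ∞) (fun p : ℝ × ℝ => φ p.1 p.2))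
    (hpos : ∀ u s, 0 < φ u s) :
    ContDiff ℝ (⊤ : ℕ∞) (fun p : ℝ × ℝ => psi φ p.1 p.2) := by
  have hφd : Differentiable ℝ (fun p : ℝ × ℝ => φ p.1 p.2) :=
    hφ.differentiable (by simp)
  have hfd : ContDiff ℝ (⊤ : ℕ∞) (fderiv ℝ (fun p : ℝ × ℝ => φ p.1 p.2)) :=
    hφ.fderiv_right (by simp)
  have e : (fun p : ℝ × ℝ => psi φ p.1 p.2)
      = fun p : ℝ × ℝ => (fderiv ℝ (fun p : ℝ × ℝ => φ p.1 p.2) p (0, 1)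
          + 2 * p.2 * fderiv ℝ (fun p : ℝ × ℝ => φ p.1 p.2) p (1, 0)) / (2 * φ p.1 p.2) := by
    funext p
    obtain ⟨u, s⟩ := p
    rw [psi, pd1, pd2, (pd1_eq' φ hφd u s).deriv, (pd2_eq' φ hφd u s).deriv]
  rw [e]
  refine ContDiff.div ?_ (contDiff_const.mul hφ) (fun p => by have := hpos p.1 p.2; positivity)
  exact (hfd.clm_apply contDiff_const).add
    ((contDiff_const.mul contDiff_snd).mul (hfd.clm_apply contDiff_const))

end aux

lemma keylem (h : ℝ → ℝ) (hsm : ContDiff ℝ (⊤ : ℕ∞) h) (hpos : ∀ w, 0 < h w) (v κ K : ℝ) :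
    (κ * ((deriv h v / (2 * h v)) ^ 2 - deriv (fun w => deriv h w / (2 * h w)) v)
        = K * (h v) ^ 2)
    ↔ (κ * deriv (deriv (fun w => 1 / Real.sqrt (h w))) v - K / (1 / Real.sqrt (h v)) ^ 3 = 0) := by
  have hdiff : Differentiable ℝ h := hsm.differentiable (by simp)
  have hd' : ContDiff ℝ (⊤ : ℕ∞) (deriv h) := (contDiff_infty_iff_deriv.mp hsm).2
  have hdd : Differentiable ℝ (deriv h) := hd'.differentiable (by simp)
  set a := h v with ha
  set s := Real.sqrt (h v) with hs
  have hane : a ≠ 0 := (hpos v).ne'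
  have hspos : 0 < s := Real.sqrt_pos.mpr (hpos v)
  have hsne : s ≠ 0 := hspos.ne'
  have hs2 : s ^ 2 = a := Real.sq_sqrt (hpos v).le
  set h1 := deriv h v with hh1
  set h2 := deriv (deriv h) v with hh2
  -- derivative of ψ-slice
  have dpsi : deriv (fun w => deriv h w / (2 * h w)) v
      = (h2 * (2 * a) - h1 * (2 * h1)) / (2 * a) ^ 2 :=
    (((hdd v).hasDerivAt).div (((hdiff v).hasDerivAt).const_mul 2)
      (by simpa using (hpos v).ne')).deriv
  -- first derivative of W = 1/√h, valid everywhere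
  have dW : ∀ w, HasDerivAt (fun t => 1 / Real.sqrt (h t))
      (-(deriv h w) / (2 * Real.sqrt (h w) ^ 3)) w := by
    intro w
    have hwne : Real.sqrt (h w) ≠ 0 := (Real.sqrt_pos.mpr (hpos w)).ne'
    have hsq : HasDerivAt (fun t => Real.sqrt (h t))
        (1 / (2 * Real.sqrt (h w)) * deriv h w) w :=
      (Real.hasDerivAt_sqrt (hpos w).ne').comp w ((hdiff w).hasDerivAt)
    have hinv := hsq.inv hwne
    have : -(1 / (2 * Real.sqrt (h w)) * deriv h w) / Real.sqrt (h w) ^ 2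
        = -(deriv h w) / (2 * Real.sqrt (h w) ^ 3) := by
      field_simp
    rw [this] at hinv
    rw [show (fun t => 1 / Real.sqrt (h t)) = (fun t => Real.sqrt (h t))⁻¹ from by funext t; simp [one_div]]
    exact hinv
  have dWfun : deriv (fun w => 1 / Real.sqrt (h w))
      = fun w => -(deriv h w) / (2 * Real.sqrt (h w) ^ 3) := funext fun w => (dW w).deriv
  -- second derivative of W at v
  have dW2 : deriv (deriv (fun w => 1 / Real.sqrt (h w))) v
      = (-h2 * (2 * s ^ 3) - -h1 * (2 * (3 * s ^ 2 * (1 / (2 * s) * h1)))) / (2 * s ^ 3) ^ 2 := by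
    rw [dWfun]
    have hsq : HasDerivAt (fun t => Real.sqrt (h t)) (1 / (2 * s) * h1) v :=
      (Real.hasDerivAt_sqrt (hpos v).ne').comp v ((hdiff v).hasDerivAt)
    have hden : HasDerivAt (fun w => 2 * Real.sqrt (h w) ^ 3)
        (2 * (3 * s ^ 2 * (1 / (2 * s) * h1))) v := by
      have := (hsq.pow 3).const_mul 2
      simpa [mul_comm, mul_assoc, mul_left_comm] using this
    have hnum : HasDerivAt (fun w => -(deriv h w)) (-h2) v := ((hdd v).hasDerivAt).neg
    exact (hnum.div hden (by positivity)).deriv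
  rw [dpsi, dW2]
  have key1 : κ * ((h1 / (2 * a)) ^ 2 - (h2 * (2 * a) - h1 * (2 * h1)) / (2 * a) ^ 2)
      = (κ * (3 * h1 ^ 2 - 2 * h2 * a)) / (4 * a ^ 2) := by
    field_simp; ring
  have key2 : κ * ((-h2 * (2 * s ^ 3) - -h1 * (2 * (3 * s ^ 2 * (1 / (2 * s) * h1)))) / (2 * s ^ 3) ^ 2)
      - K / (1 / s) ^ 3
      = ((κ * (3 * h1 ^ 2 - 2 * h2 * a)) - K * a ^ 2 * (4 * a ^ 2)) / (4 * a ^ 2 * s) := by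
    rw [← hs2]; field_simp; ring
  rw [key1, key2, div_eq_iff (by positivity), div_eq_zero_iff, sub_eq_zero]
  constructor
  · intro H; left; exact H
  · rintro (H | H)
    · exact H
    · exact absurd H (by positivity)


/-- Under the change of variables `u = b² − s²`, `v = s` (i.e. `φ(u,s) = Φ(u − s², s)`),
the Einstein PDE with `μ = 0`, namely `κ·[ψ² − (ψ₂ + 2s·ψ₁)] = K·φ²`, is
equivalent to `κ·W_vv − K·W⁻³ = 0`, where `W = 1/√Φ`. -/
theorem stmt_7 (φ Φ : ℝ → ℝ → ℝ)
    (hφ_pos : ∀ u s, 0 < φ u s)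
    (hφ_smooth : ContDiff ℝ (⊤ : ℕ∞) (fun p : ℝ × ℝ => φ p.1 p.2))
    (hrel : ∀ u s, φ u s = Φ (u - s ^ 2) s)
    (κ K : ℝ) :
    (∀ u s : ℝ, κ * ((psi φ u s) ^ 2
        - (pd2 (psi φ) u s + 2 * s * pd1 (psi φ) u s)) = K * (φ u s) ^ 2) ↔
    (∀ u v : ℝ, κ * pd2 (pd2 (fun u' v' => 1 / Real.sqrt (Φ u' v'))) u v
        - K / (1 / Real.sqrt (Φ u v)) ^ 3 = 0) := by
  have hφi : ContDiff ℝ (⊤ : ℕ∞) (fun p : ℝ × ℝ => φ p.1 p.2) := hφ_smooth.of_le (by simp)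
  have hφd : Differentiable ℝ (fun p : ℝ × ℝ => φ p.1 p.2) :=
    hφi.differentiable (by simp)
  have hψd : Differentiable ℝ (fun p : ℝ × ℝ => psi φ p.1 p.2) :=
    (psi_smooth φ hφi hφ_pos).differentiable (by simp)
  have hΦ : ∀ x y, Φ x y = φ (x + y ^ 2) y := by
    intro x y
    rw [hrel (x + y ^ 2) y, show x + y ^ 2 - y ^ 2 = x from by ring]
  have hHpos : ∀ x, ∀ w, 0 < HH φ x w := fun x w => hφ_pos _ _
  have hφH : ∀ u s : ℝ, φ u s = HH φ (u - s ^ 2) s := by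
    intro u s
    show φ u s = φ (u - s ^ 2 + s ^ 2) s
    rw [show u - s ^ 2 + s ^ 2 = u from by ring]
  have hψrel : ∀ u s : ℝ, psi φ u s
      = deriv (HH φ (u - s ^ 2)) s / (2 * HH φ (u - s ^ 2) s) := by
    intro u s
    rw [psi, ← lemA φ hφd u s]
    have e1 : (fun v => φ (u - s ^ 2 + v ^ 2) v) = HH φ (u - s ^ 2) := rfl
    rw [e1, ← hφH u s]
  have hDψ : ∀ u s : ℝ, pd2 (psi φ) u s + 2 * s * pd1 (psi φ) u s
      = deriv (fun w => deriv (HH φ (u - s ^ 2)) w / (2 * HH φ (u - s ^ 2) w)) s := by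
    intro u s
    rw [← lemA (psi φ) hψd u s]
    congr 1
    funext w
    rw [hψrel (u - s ^ 2 + w ^ 2) w,
      show u - s ^ 2 + w ^ 2 - w ^ 2 = u - s ^ 2 from by ring]
  have main : ∀ u s : ℝ,
      (κ * ((psi φ u s) ^ 2 - (pd2 (psi φ) u s + 2 * s * pd1 (psi φ) u s)) = K * (φ u s) ^ 2)
      ↔ (κ * pd2 (pd2 (fun u' v' => 1 / Real.sqrt (Φ u' v'))) (u - s ^ 2) s
          - K / (1 / Real.sqrt (Φ (u - s ^ 2) s)) ^ 3 = 0) := by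
    intro u s
    rw [hψrel u s, hDψ u s, hφH u s]
    have hB : κ * pd2 (pd2 (fun u' v' => 1 / Real.sqrt (Φ u' v'))) (u - s ^ 2) s
          - K / (1 / Real.sqrt (Φ (u - s ^ 2) s)) ^ 3
        = κ * deriv (deriv (fun t => 1 / Real.sqrt (HH φ (u - s ^ 2) t))) s
          - K / (1 / Real.sqrt (HH φ (u - s ^ 2) s)) ^ 3 := by
      have e : (fun t => 1 / Real.sqrt (Φ (u - s ^ 2) t))
          = (fun t => 1 / Real.sqrt (HH φ (u - s ^ 2) t)) := funext fun t => by rw [hΦ]; rfl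
      show κ * deriv (deriv (fun t => 1 / Real.sqrt (Φ (u - s ^ 2) t))) s
          - K / (1 / Real.sqrt (Φ (u - s ^ 2) s)) ^ 3 = _
      rw [e, hΦ]
      rfl
    rw [hB]
    exact keylem (HH φ (u - s ^ 2)) (HH_smooth φ hφi (u - s ^ 2)) (hHpos (u - s ^ 2)) s κ K
  constructor
  · intro hL u v
    have := (main (u + v ^ 2) v).mp (hL (u + v ^ 2) v)
    rwa [show u + v ^ 2 - v ^ 2 = u from by ring] at this
  · intro hR u s
    exact (main u s).mpr (hR (u - s ^ 2) s)
end

section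
/- Let σ be a real constant and let w : I → ℝ be a positive, twice continuously differentiable, non-constant function on an open interval I satisfying w''(v) = σ·w(v)^{−3} for all v ∈ I. Then either (a) σ < 0 and there exist a constant p and a sign ε ∈ {+1, −1} such that w(v)² = p + 2ε√(−σ)·v on I, or (b) there exist constants p and q with q ≠ 0 such that q·w(v)² = (p + q·v)² + σ on I. -/
/-!
Along a solution of `w'' = σ w⁻³` the energy `E = w'² + σ w⁻²` is conserved, and `f = w²`
satisfies `f'' = 2 w'² + 2 w w'' = 2E`, so `w²` is a quadratic polynomial `E v² + c₁ v + c₀`.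
Evaluating `w² E - (w w')² = σ` on it gives `4σ = 4 E c₀ - c₁²`. If `E ≠ 0`, multiplying by `E`
and completing the square gives case (b) with `q = E`, `p = c₁ / 2`. If `E = 0`, then `w²` is
affine with `σ = -c₁² / 4`, and `c₁ ≠ 0` because `w` is not constant; this is case (a) with `ε`
the sign of `c₁`.
-/

section ConstantOfDerivative

variable {s : Set ℝ} {f g g' : ℝ → ℝ}

theorem IsOpen.exists_eq_add_of_hasDerivAt (hs : IsOpen s) (hs' : IsPreconnected s)
    (hf : ∀ x ∈ s, HasDerivAt f (g' x) x) (hg : ∀ x ∈ s, HasDerivAt g (g' x) x) :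
    ∃ c, ∀ x ∈ s, f x = g x + c :=
  hs.exists_eq_add_of_deriv_eq hs'
    (fun x hx => (hf x hx).differentiableAt.differentiableWithinAt)
    (fun x hx => (hg x hx).differentiableAt.differentiableWithinAt)
    (fun x hx => by rw [(hf x hx).deriv, (hg x hx).deriv])

theorem IsOpen.exists_eq_quadratic_of_hasDerivAt {f' : ℝ → ℝ} {a : ℝ} (hs : IsOpen s)
    (hs' : IsPreconnected s) (hf : ∀ x ∈ s, HasDerivAt f (f' x) x)
    (hf' : ∀ x ∈ s, HasDerivAt f' (2 * a) x) :
    ∃ b c, ∀ x ∈ s, f' x = 2 * a * x + b ∧ f x = a * x ^ 2 + b * x + c := by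
  obtain ⟨b, hb⟩ := hs.exists_eq_add_of_hasDerivAt hs' hf' fun x _ =>
    (hasDerivAt_id' (x := x)).const_mul (2 * a) |>.congr_deriv (mul_one _)
  obtain ⟨c, hc⟩ := hs.exists_eq_add_of_hasDerivAt hs' (g := fun x => a * x ^ 2 + b * x) hf
    fun x hx => by
      rw [hb x hx]
      refine ((hasDerivAt_pow 2 x).const_mul a |>.add <|
        (hasDerivAt_id' (x := x)).const_mul b).congr_deriv ?_
      push_cast
      ring
  exact ⟨b, c, fun x hx => ⟨hb x hx, hc x hx⟩⟩

end ConstantOfDerivative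

theorem ContDiffOn.hasDerivAt_deriv_of_isOpen {f : ℝ → ℝ} {s : Set ℝ}
    (hf : ContDiffOn ℝ 2 f s) (hs : IsOpen s) {x : ℝ} (hx : x ∈ s) :
    HasDerivAt f (deriv f x) x ∧ HasDerivAt (deriv f) (deriv (deriv f) x) x :=
  ⟨((hf.differentiableOn (by norm_num)).differentiableAt (hs.mem_nhds hx)).hasDerivAt,
    (((hf.deriv_of_isOpen hs (by norm_num : (1 : WithTop ℕ∞) + 1 ≤ 2)).differentiableOn
      one_ne_zero).differentiableAt (hs.mem_nhds hx)).hasDerivAt⟩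

section InverseCubeEquation

variable {w w' : ℝ → ℝ} {σ x : ℝ}

theorem hasDerivAt_energy_of_inverse_cube (hw : HasDerivAt w (w' x) x)
    (hw' : HasDerivAt w' (σ / w x ^ 3) x) (hx : w x ≠ 0) :
    HasDerivAt (fun y => w' y ^ 2 + σ / w y ^ 2) 0 x := by
  refine ((hw'.fun_pow 2).add <|
    (hasDerivAt_const x σ).div (hw.fun_pow 2) (pow_ne_zero 2 hx)).congr_deriv ?_
  field_simp
  ring

theorem hasDerivAt_two_mul_mul_deriv_of_inverse_cube (hw : HasDerivAt w (w' x) x)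
    (hw' : HasDerivAt w' (σ / w x ^ 3) x) (hx : w x ≠ 0) :
    HasDerivAt (fun y => 2 * w y * w' y) (2 * (w' x ^ 2 + σ / w x ^ 2)) x := by
  refine ((hw.const_mul 2).mul hw').congr_deriv ?_
  field_simp

theorem exists_sq_eq_quadratic_of_inverse_cube {s : Set ℝ} (hs : IsOpen s)
    (hs' : IsPreconnected s) {x₀ : ℝ} (hx₀ : x₀ ∈ s)
    (hw : ∀ x ∈ s, HasDerivAt w (w' x) x) (hw' : ∀ x ∈ s, HasDerivAt w' (σ / w x ^ 3) x)
    (hw0 : ∀ x ∈ s, w x ≠ 0) :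
    ∃ E b c, 4 * σ = 4 * E * c - b ^ 2 ∧ ∀ x ∈ s, w x ^ 2 = E * x ^ 2 + b * x + c := by
  obtain ⟨E, hE⟩ := hs.exists_eq_add_of_hasDerivAt hs' (g := fun _ => 0)
    (fun x hx => hasDerivAt_energy_of_inverse_cube (hw x hx) (hw' x hx) (hw0 x hx))
    (fun x _ => hasDerivAt_const x 0)
  obtain ⟨b, c, hbc⟩ := hs.exists_eq_quadratic_of_hasDerivAt hs' (a := E)
    (f := fun x => w x ^ 2) (f' := fun x => 2 * w x * w' x)
    (fun x hx => (hw x hx).fun_pow 2 |>.congr_deriv (by ring))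
    (fun x hx => by
      simpa [hE x hx] using hasDerivAt_two_mul_mul_deriv_of_inverse_cube (hw x hx) (hw' x hx)
        (hw0 x hx))
  refine ⟨E, b, c, ?_, fun x hx => (hbc x hx).2⟩
  obtain ⟨hderiv, hsq⟩ := hbc x₀ hx₀
  have henergy := hE x₀ hx₀
  field_simp [hw0 x₀ hx₀] at henergy
  -- `w² E - (w w')² = σ`, evaluated on the quadratic
  linear_combination 4 * henergy + 4 * E * hsq - (2 * w x₀ * w' x₀ + 2 * E * x₀ + b) * hderiv

end InverseCubeEquation

/-- Classification of the non-constant positive solutions of `w'' = σ·w⁻³` on an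
open interval: either `σ < 0` and `w² = p ± 2√(−σ)·v`, or `q·w² = (p + q·v)² + σ`
for some constants `p`, `q ≠ 0`. -/
theorem stmt_8 (σ : ℝ) (a b : ℝ) (w : ℝ → ℝ)
    (hw_pos : ∀ v ∈ Set.Ioo a b, 0 < w v)
    (hw_smooth : ContDiffOn ℝ 2 w (Set.Ioo a b))
    (hw_nonconst : ∃ v₁ ∈ Set.Ioo a b, ∃ v₂ ∈ Set.Ioo a b, w v₁ ≠ w v₂)
    (hode : ∀ v ∈ Set.Ioo a b, deriv (deriv w) v = σ / (w v) ^ 3) :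
    (σ < 0 ∧ ∃ (p ε : ℝ), (ε = 1 ∨ ε = -1) ∧
        ∀ v ∈ Set.Ioo a b, (w v) ^ 2 = p + 2 * ε * Real.sqrt (-σ) * v) ∨
    (∃ p q : ℝ, q ≠ 0 ∧
        ∀ v ∈ Set.Ioo a b, q * (w v) ^ 2 = (p + q * v) ^ 2 + σ) := by
  obtain ⟨v₁, hv₁, v₂, hv₂, hne⟩ := hw_nonconst
  have hderiv := fun v hv => hw_smooth.hasDerivAt_deriv_of_isOpen isOpen_Ioo (x := v) hv
  obtain ⟨E, c₁, c₀, hσ, hsq⟩ := exists_sq_eq_quadratic_of_inverse_cube isOpen_Ioo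
    isPreconnected_Ioo hv₁ (fun v hv => (hderiv v hv).1)
    (fun v hv => hode v hv ▸ (hderiv v hv).2) (fun v hv => (hw_pos v hv).ne')
  rcases eq_or_ne E 0 with rfl | hE
  · have hc₁ : c₁ ≠ 0 := by
      rintro rfl
      refine hne <| (pow_left_inj₀ (hw_pos v₁ hv₁).le (hw_pos v₂ hv₂).le two_ne_zero).1 ?_
      simp [hsq v₁ hv₁, hsq v₂ hv₂]
    have hsqrt : Real.sqrt (-σ) = |c₁| / 2 := by
      rw [show -σ = (|c₁| / 2) ^ 2 by rw [div_pow, sq_abs]; linarith]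
      exact Real.sqrt_sq (by positivity)
    refine Or.inl ⟨by linarith [sq_pos_of_ne_zero hc₁], c₀, ?_⟩
    rcases abs_choice c₁ with h | h
    · exact ⟨1, Or.inl rfl, fun v hv => by rw [hsq v hv, hsqrt, h]; ring⟩
    · exact ⟨-1, Or.inr rfl, fun v hv => by rw [hsq v hv, hsqrt, h]; ring⟩
  · exact Or.inr ⟨c₁ / 2, E, hE, fun v hv => by rw [hsq v hv]; linear_combination -hσ / 4⟩
end

section
/- Let σ and D be real constants and let q = q(u) be a differentiable, nowhere-zero function on an open interval I satisfying 2·(D²·q(u)⁴ + σ)·q'(u) + q(u)³ = 0 for all u ∈ I. Then there exists a constant C such that D²·q(u)⁴ + (u − C)·q(u)² − σ = 0 for all u ∈ I. -/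
/-! With `p = q²` the equation reads `(D²p² + σ) p' + p² = 0`. Dividing by `p²` exhibits it as
`(D²p − σ/p + u)' = 0`, so `D²p − σ/p + u` is a constant `C` on the interval; multiplying by `p`
gives `D²p² + (u − C) p − σ = 0`. -/

noncomputable def firstIntegral (D σ : ℝ) (p : ℝ → ℝ) (u : ℝ) : ℝ :=
  D ^ 2 * p u - σ / p u + u

theorem hasDerivAt_firstIntegral_of_ode {σ D p' u : ℝ} {p : ℝ → ℝ}
    (hp : HasDerivAt p p' u) (hp0 : p u ≠ 0)
    (hode : (D ^ 2 * p u ^ 2 + σ) * p' + p u ^ 2 = 0) :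
    HasDerivAt (firstIntegral D σ p) 0 u := by
  have hderiv := ((hp.const_mul (D ^ 2)).fun_sub ((hasDerivAt_const u σ).fun_div hp hp0)).fun_add
    (hasDerivAt_id' u)
  refine hderiv.congr_deriv ?_
  field_simp
  linear_combination hode

theorem quadratic_eq_zero_of_firstIntegral_eq {σ D C u : ℝ} {p : ℝ → ℝ} (hp0 : p u ≠ 0)
    (hC : firstIntegral D σ p u = C) :
    D ^ 2 * p u ^ 2 + (u - C) * p u - σ = 0 := by
  rw [← hC, firstIntegral]
  field_simp
  ring

/-- Integration of `2(D²q⁴ + σ)q' + q³ = 0`: the solutions satisfy the implicit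
algebraic equation `D²q⁴ + (u − C)q² − σ = 0` for some constant `C`. -/
theorem stmt_13 (σ D : ℝ) (a b : ℝ) (q : ℝ → ℝ)
    (hq : ∀ u ∈ Set.Ioo a b, DifferentiableAt ℝ q u)
    (hq0 : ∀ u ∈ Set.Ioo a b, q u ≠ 0)
    (heq : ∀ u ∈ Set.Ioo a b,
        2 * (D ^ 2 * (q u) ^ 4 + σ) * deriv q u + (q u) ^ 3 = 0) :
    ∃ C : ℝ, ∀ u ∈ Set.Ioo a b,
        D ^ 2 * (q u) ^ 4 + (u - C) * (q u) ^ 2 - σ = 0 := by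
  have hderiv : ∀ u ∈ Set.Ioo a b, HasDerivAt (firstIntegral D σ fun v => q v ^ 2) 0 u :=
    fun u hu => hasDerivAt_firstIntegral_of_ode ((hq u hu).hasDerivAt.fun_pow 2)
      (pow_ne_zero 2 (hq0 u hu)) (by linear_combination q u * heq u hu)
  obtain ⟨C, hC⟩ := isOpen_Ioo.exists_is_const_of_deriv_eq_zero isPreconnected_Ioo
    (fun u hu => (hderiv u hu).differentiableAt.differentiableWithinAt)
    (fun u hu => (hderiv u hu).deriv)
  refine ⟨C, fun u hu => ?_⟩
  linear_combination quadratic_eq_zero_of_firstIntegral_eq (p := fun v => q v ^ 2)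
    (pow_ne_zero 2 (hq0 u hu)) (hC u hu)
end

section
/- Let C and D be real constants with D > 0, let ε ∈ {+1, −1}, and define φ(u,s) := D/(√(C − u + s²)·(√(C − u + s²) + ε·s)²) on an open set where C − u + s² > 0 and √(C − u + s²) + ε·s > 0. Then φ satisfies the projective PDE (∗): φ₂₂ = 2(φ₁ − s·φ₁₂), and with ψ := (φ₂ + 2s·φ₁)/(2φ) it satisfies ψ² − (ψ₂ + 2s·ψ₁) = 0 (the Einstein PDE with μ = 0 and K = 0). -/
/-!
Write `W = √(C - u + s²)` and `A = W + εs`, so that `φ = D / (W A²)`. On the domain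
`∂ₛW = s/W`, `∂ᵤW = -1/(2W)`, `∂ₛA = s/W + ε` and `∂ᵤA = -1/(2W)`, hence every partial
derivative of `φ` is a rational function of `W`, `A`, `s`; with `ε² = 1` the ones that
matter simplify to `φ₁ = D(A + 2W)/(2W³A³)`, `φ₂₂ = 3D/W⁵` and `ψ = -ε/A`. The transport
operator `∂ₛ + 2s∂ᵤ` sends `A` to `ε`, so `ψ₂ + 2sψ₁ = ε²/A² = ψ²`; the projective equation
reduces to `(A + 2W)W² + s(8εW² + 9sW + 3εs²) = 3A³`, i.e. to `A = W + εs`.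
-/

open Filter Topology

section PartialDerivatives

variable {f g : ℝ → ℝ → ℝ} {U : Set (ℝ × ℝ)} {u s : ℝ}

theorem pd1_congr (hU : IsOpen U) (hfg : ∀ u s, (u, s) ∈ U → f u s = g u s)
    (hus : (u, s) ∈ U) :
    pd1 f u s = pd1 g u s := by
  have hU' : ∀ᶠ t in 𝓝 u, (t, s) ∈ U :=
    (continuous_id.prodMk continuous_const).continuousAt.preimage_mem_nhds (hU.mem_nhds hus)
  exact Filter.EventuallyEq.deriv_eq (f₁ := fun t => f t s) (f := fun t => g t s)
    (hU'.mono fun t ht => hfg t s ht)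

theorem pd2_congr (hU : IsOpen U) (hfg : ∀ u s, (u, s) ∈ U → f u s = g u s)
    (hus : (u, s) ∈ U) :
    pd2 f u s = pd2 g u s := by
  have hU' : ∀ᶠ y in 𝓝 s, (u, y) ∈ U :=
    (continuous_const.prodMk continuous_id).continuousAt.preimage_mem_nhds (hU.mem_nhds hus)
  exact Filter.EventuallyEq.deriv_eq (f₁ := f u) (f := g u) (hU'.mono fun y hy => hfg u y hy)

end PartialDerivatives

namespace BerwaldSolution

noncomputable def W (C u s : ℝ) : ℝ := √(C - u + s ^ 2)

noncomputable def A (C ε u s : ℝ) : ℝ := W C u s + ε * s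

noncomputable def phi (C D ε u s : ℝ) : ℝ := D / (W C u s * A C ε u s ^ 2)

def domain (C ε : ℝ) : Set (ℝ × ℝ) := {p | 0 < C - p.1 + p.2 ^ 2 ∧ 0 < A C ε p.1 p.2}

theorem isOpen_domain (C ε : ℝ) : IsOpen (domain C ε) := by
  have hQ : Continuous fun p : ℝ × ℝ => C - p.1 + p.2 ^ 2 := by fun_prop
  exact (isOpen_lt continuous_const hQ).inter
    (isOpen_lt continuous_const (hQ.sqrt.add (continuous_const.mul continuous_snd)))

variable {C D ε u s : ℝ}

theorem W_pos (hQ : 0 < C - u + s ^ 2) : 0 < W C u s := Real.sqrt_pos.mpr hQ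

theorem hasDerivAt_W_fst (hQ : 0 < C - u + s ^ 2) :
    HasDerivAt (fun t => W C t s) (-1 / (2 * W C u s)) u := by
  have h : HasDerivAt (fun t => C - t + s ^ 2) (-1) u := by
    simpa using ((hasDerivAt_id u).const_sub C).add_const (s ^ 2)
  exact h.sqrt hQ.ne'

theorem hasDerivAt_W_snd (hQ : 0 < C - u + s ^ 2) :
    HasDerivAt (W C u) (s / W C u s) s := by
  have h : HasDerivAt (fun y => C - u + y ^ 2) (2 * s) s := by
    simpa using (hasDerivAt_pow 2 s).const_add (C - u)
  rw [show s / W C u s = 2 * s / (2 * W C u s) by ring]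
  exact h.sqrt hQ.ne'

theorem hasDerivAt_A_fst (ε : ℝ) (hQ : 0 < C - u + s ^ 2) :
    HasDerivAt (fun t => A C ε t s) (-1 / (2 * W C u s)) u :=
  (hasDerivAt_W_fst hQ).add_const _

theorem hasDerivAt_A_snd (ε : ℝ) (hQ : 0 < C - u + s ^ 2) :
    HasDerivAt (A C ε u) (s / W C u s + ε) s :=
  ((hasDerivAt_W_snd hQ).fun_add ((hasDerivAt_id' s).const_mul ε)).congr_deriv (by ring)

theorem pd1_phi (hQ : 0 < C - u + s ^ 2) (hA : 0 < A C ε u s) :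
    pd1 (phi C D ε) u s = D * (A C ε u s + 2 * W C u s) / (2 * W C u s ^ 3 * A C ε u s ^ 3) := by
  have hW₀ := (W_pos hQ).ne'
  have hA₀ := hA.ne'
  refine ((hasDerivAt_const u D).fun_div ((hasDerivAt_W_fst hQ).fun_mul
    ((hasDerivAt_A_fst ε hQ).fun_pow 2)) (mul_ne_zero hW₀ (pow_ne_zero 2 hA₀))).deriv.trans ?_
  field_simp
  ring

theorem pd2_phi (hQ : 0 < C - u + s ^ 2) (hA : 0 < A C ε u s) (hε : ε ^ 2 = 1) :
    pd2 (phi C D ε) u s = -D * (s + 2 * ε * W C u s) / (W C u s ^ 3 * A C ε u s ^ 2) := by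
  have hW₀ := (W_pos hQ).ne'
  have hA₀ := hA.ne'
  refine ((hasDerivAt_const s D).fun_div ((hasDerivAt_W_snd hQ).fun_mul
    ((hasDerivAt_A_snd ε hQ).fun_pow 2)) (mul_ne_zero hW₀ (pow_ne_zero 2 hA₀))).deriv.trans ?_
  field_simp
  unfold A
  rcases sq_eq_one_iff.mp hε with rfl | rfl <;> ring

theorem pd2_pd1_phi (hQ : 0 < C - u + s ^ 2) (hA : 0 < A C ε u s) (hε : ε ^ 2 = 1) :
    pd2 (pd1 (phi C D ε)) u s = -D * (8 * ε * W C u s ^ 2 + 9 * s * W C u s + 3 * ε * s ^ 2) /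
      (2 * W C u s ^ 5 * A C ε u s ^ 3) := by
  have hW₀ := (W_pos hQ).ne'
  have hA₀ := hA.ne'
  rw [pd2_congr (isOpen_domain C ε) (fun _ _ h => pd1_phi h.1 h.2) ⟨hQ, hA⟩]
  have hnum := ((hasDerivAt_A_snd ε hQ).fun_add ((hasDerivAt_W_snd hQ).const_mul 2)).const_mul D
  have hden := ((hasDerivAt_W_snd hQ).fun_pow 3).const_mul 2 |>.fun_mul
    ((hasDerivAt_A_snd ε hQ).fun_pow 3)
  refine (hnum.fun_div hden (by positivity)).deriv.trans ?_
  field_simp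
  unfold A
  rcases sq_eq_one_iff.mp hε with rfl | rfl <;> ring

theorem pd2_pd2_phi (hQ : 0 < C - u + s ^ 2) (hA : 0 < A C ε u s) (hε : ε ^ 2 = 1) :
    pd2 (pd2 (phi C D ε)) u s = 3 * D / W C u s ^ 5 := by
  have hW₀ := (W_pos hQ).ne'
  have hA₀ := hA.ne'
  rw [pd2_congr (isOpen_domain C ε) (fun _ _ h => pd2_phi h.1 h.2 hε) ⟨hQ, hA⟩]
  have hnum :=
    ((hasDerivAt_id' s).fun_add ((hasDerivAt_W_snd hQ).const_mul (2 * ε))).const_mul (-D)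
  have hden := ((hasDerivAt_W_snd hQ).fun_pow 3).fun_mul ((hasDerivAt_A_snd ε hQ).fun_pow 2)
  refine (hnum.fun_div hden (by positivity)).deriv.trans ?_
  field_simp
  unfold A
  rcases sq_eq_one_iff.mp hε with rfl | rfl <;> ring

theorem psi_phi (hQ : 0 < C - u + s ^ 2) (hA : 0 < A C ε u s) (hD : D ≠ 0) (hε : ε ^ 2 = 1) :
    psi (phi C D ε) u s = -ε / A C ε u s := by
  have hW₀ := (W_pos hQ).ne'
  have hA₀ := hA.ne'
  rw [psi, pd1_phi hQ hA, pd2_phi hQ hA hε, phi]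
  field_simp
  unfold A
  rcases sq_eq_one_iff.mp hε with rfl | rfl <;> ring

theorem pd1_psi_phi (hQ : 0 < C - u + s ^ 2) (hA : 0 < A C ε u s) (hD : D ≠ 0)
    (hε : ε ^ 2 = 1) :
    pd1 (psi (phi C D ε)) u s = -ε / (2 * W C u s * A C ε u s ^ 2) := by
  have hW₀ := (W_pos hQ).ne'
  have hA₀ := hA.ne'
  rw [pd1_congr (isOpen_domain C ε) (fun _ _ h => psi_phi h.1 h.2 hD hε) ⟨hQ, hA⟩]
  refine ((hasDerivAt_const u (-ε)).fun_div (hasDerivAt_A_fst ε hQ) hA₀).deriv.trans ?_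
  field_simp
  ring

theorem pd2_psi_phi (hQ : 0 < C - u + s ^ 2) (hA : 0 < A C ε u s) (hD : D ≠ 0)
    (hε : ε ^ 2 = 1) :
    pd2 (psi (phi C D ε)) u s = 1 / (W C u s * A C ε u s) := by
  have hW₀ := (W_pos hQ).ne'
  have hA₀ := hA.ne'
  rw [pd2_congr (isOpen_domain C ε) (fun _ _ h => psi_phi h.1 h.2 hD hε) ⟨hQ, hA⟩]
  refine ((hasDerivAt_const s (-ε)).fun_div (hasDerivAt_A_snd ε hQ) hA₀).deriv.trans ?_
  field_simp
  unfold A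
  rcases sq_eq_one_iff.mp hε with rfl | rfl <;> ring

end BerwaldSolution

open BerwaldSolution in
/-- The case `D ≠ 0`, `σ = 0` (Berwald type): `φ(u,s) = D/(√(C−u+s²)·(√(C−u+s²)+εs)²)`
satisfies the projective PDE `φ₂₂ = 2(φ₁ − s·φ₁₂)` and `ψ² − (ψ₂ + 2s·ψ₁) = 0`. -/
theorem stmt_17 (C D : ℝ) (hD : 0 < D) (ε : ℝ) (hε : ε = 1 ∨ ε = -1)
    (φ : ℝ → ℝ → ℝ)
    (hφ : ∀ u s : ℝ, φ u s = D / (Real.sqrt (C - u + s ^ 2)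
        * (Real.sqrt (C - u + s ^ 2) + ε * s) ^ 2)) :
    ∀ u s : ℝ, 0 < C - u + s ^ 2 → 0 < Real.sqrt (C - u + s ^ 2) + ε * s →
      (pd2 (pd2 φ) u s = 2 * (pd1 φ u s - s * pd2 (pd1 φ) u s)
        ∧ (psi φ u s) ^ 2 - (pd2 (psi φ) u s + 2 * s * pd1 (psi φ) u s) = 0) := by
  obtain rfl : φ = phi C D ε := funext₂ hφ
  have hε2 : ε ^ 2 = 1 := sq_eq_one_iff.mpr hε
  intro u s hQ hA
  have hW₀ := (W_pos hQ).ne'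
  have hA₀ : A C ε u s ≠ 0 := hA.ne'
  constructor
  · rw [pd2_pd2_phi hQ hA hε2, pd1_phi hQ hA, pd2_pd1_phi hQ hA hε2]
    field_simp
    unfold A
    rcases hε with rfl | rfl <;> ring
  · rw [psi_phi hQ hA hD.ne' hε2, pd2_psi_phi hQ hA hD.ne' hε2,
      pd1_psi_phi hQ hA hD.ne' hε2]
    field_simp
    unfold A
    rcases hε with rfl | rfl <;> ring
end

section
/- Let κ > 0 and K be real constants with σ := K/κ < 0, let C be a real constant, and define φ(u,s) := √(−σ⁻¹·(C − u + s²))/(C − u) on an open set where C − u + s² > 0, C − u ≠ 0, and φ > 0. Then φ satisfies the projective PDE (∗): φ₂₂ = 2(φ₁ − s·φ₁₂), and with ψ := (φ₂ + 2s·φ₁)/(2φ) it satisfies κ·[ψ² − (ψ₂ + 2s·ψ₁)] = K·φ². -/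
open Filter Topology

theorem pd1_const_mul (c : ℝ) (f : ℝ → ℝ → ℝ) :
    pd1 (fun u s => c * f u s) = fun u s => c * pd1 f u s := by
  ext u s
  exact congrFun (deriv_const_mul_field' c) u

theorem pd2_const_mul (c : ℝ) (f : ℝ → ℝ → ℝ) :
    pd2 (fun u s => c * f u s) = fun u s => c * pd2 f u s := by
  ext u s
  exact congrFun (deriv_const_mul_field' c) s

theorem psi_const_mul {c : ℝ} (hc : c ≠ 0) (f : ℝ → ℝ → ℝ) :
    psi (fun u s => c * f u s) = psi f := by
  ext u s
  simp only [psi, pd1_const_mul, pd2_const_mul]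
  rw [← mul_div_mul_left _ (2 * f u s) hc]
  ring

noncomputable def riemannianPhi (C u s : ℝ) : ℝ := √(C - u + s ^ 2) / (C - u)

namespace riemannianPhi

variable {C u s : ℝ}

theorem hasDerivAt_sqrt_snd (hw : 0 < C - u + s ^ 2) :
    HasDerivAt (fun t => √(C - u + t ^ 2)) (s / √(C - u + s ^ 2)) s :=
  (((hasDerivAt_pow 2 s).const_add (C - u)).sqrt hw.ne').congr_deriv (by field_simp; ring)

theorem hasDerivAt_sqrt_fst (hw : 0 < C - u + s ^ 2) :
    HasDerivAt (fun t => √(C - t + s ^ 2)) (-1 / (2 * √(C - u + s ^ 2))) u :=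
  ((((hasDerivAt_id' u).const_sub C).add_const (s ^ 2)).sqrt hw.ne').congr_deriv (by simp)

theorem pd2_eq (hw : 0 < C - u + s ^ 2) :
    pd2 (riemannianPhi C) u s = s / (√(C - u + s ^ 2) * (C - u)) := by
  rw [div_mul_eq_div_div]
  exact ((hasDerivAt_sqrt_snd hw).div_const (C - u)).deriv

theorem pd1_eq (hw : 0 < C - u + s ^ 2) (hv : C - u ≠ 0) :
    pd1 (riemannianPhi C) u s = (C - u + 2 * s ^ 2) / (2 * √(C - u + s ^ 2) * (C - u) ^ 2) := by
  have hr : 0 < √(C - u + s ^ 2) := Real.sqrt_pos.mpr hw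
  have hr2 : √(C - u + s ^ 2) ^ 2 = C - u + s ^ 2 := Real.sq_sqrt hw.le
  refine ((hasDerivAt_sqrt_fst hw).div ((hasDerivAt_id' u).const_sub C) hv).deriv.trans ?_
  field_simp
  linear_combination 2 * hr2

theorem psi_eq (hw : 0 < C - u + s ^ 2) (hv : C - u ≠ 0) :
    psi (riemannianPhi C) u s = s / (C - u) := by
  have hr : 0 < √(C - u + s ^ 2) := Real.sqrt_pos.mpr hw
  have hr2 : √(C - u + s ^ 2) ^ 2 = C - u + s ^ 2 := Real.sq_sqrt hw.le
  rw [psi, pd2_eq hw, pd1_eq hw hv, riemannianPhi]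
  field_simp
  linear_combination (-2 * s) * hr2

theorem eventually_domain_snd (hw : 0 < C - u + s ^ 2) : ∀ᶠ t in 𝓝 s, 0 < C - u + t ^ 2 :=
  continuousAt_const.eventually_lt (by fun_prop) hw

theorem eventually_domain_fst (hw : 0 < C - u + s ^ 2) (hv : C - u ≠ 0) :
    ∀ᶠ t in 𝓝 u, 0 < C - t + s ^ 2 ∧ C - t ≠ 0 :=
  (continuousAt_const.eventually_lt (g := fun t => C - t + s ^ 2) (by fun_prop) hw).and
    (((continuous_sub_left C).continuousAt (x := u)).eventually_ne hv)

theorem pd2_pd2_eq (hw : 0 < C - u + s ^ 2) (hv : C - u ≠ 0) :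
    pd2 (pd2 (riemannianPhi C)) u s = 1 / √(C - u + s ^ 2) ^ 3 := by
  have hr : 0 < √(C - u + s ^ 2) := Real.sqrt_pos.mpr hw
  have hr2 : √(C - u + s ^ 2) ^ 2 = C - u + s ^ 2 := Real.sq_sqrt hw.le
  have hloc : pd2 (riemannianPhi C) u =ᶠ[𝓝 s] fun t => t / (√(C - u + t ^ 2) * (C - u)) :=
    (eventually_domain_snd hw).mono fun t ht => pd2_eq ht
  rw [pd2, hloc.deriv_eq]
  refine ((hasDerivAt_id' s).div ((hasDerivAt_sqrt_snd hw).mul_const (C - u))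
    (mul_ne_zero hr.ne' hv)).deriv.trans ?_
  field_simp
  linear_combination hr2

theorem pd2_pd1_eq (hw : 0 < C - u + s ^ 2) (hv : C - u ≠ 0) :
    pd2 (pd1 (riemannianPhi C)) u s =
      s * (3 * (C - u) + 2 * s ^ 2) / (2 * √(C - u + s ^ 2) ^ 3 * (C - u) ^ 2) := by
  have hr : 0 < √(C - u + s ^ 2) := Real.sqrt_pos.mpr hw
  have hr2 : √(C - u + s ^ 2) ^ 2 = C - u + s ^ 2 := Real.sq_sqrt hw.le
  have hloc : pd1 (riemannianPhi C) u =ᶠ[𝓝 s]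
      fun t => (C - u + 2 * t ^ 2) / (2 * √(C - u + t ^ 2) * (C - u) ^ 2) :=
    (eventually_domain_snd hw).mono fun t ht => pd1_eq ht hv
  rw [pd2, hloc.deriv_eq]
  refine ((((hasDerivAt_pow 2 s).const_mul 2).const_add (C - u)).div
    (((hasDerivAt_sqrt_snd hw).const_mul 2).mul_const _) (by positivity)).deriv.trans ?_
  field_simp
  linear_combination (4 * s) * hr2

theorem pd2_psi_eq (hw : 0 < C - u + s ^ 2) (hv : C - u ≠ 0) :
    pd2 (psi (riemannianPhi C)) u s = 1 / (C - u) := by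
  have hloc : psi (riemannianPhi C) u =ᶠ[𝓝 s] fun t => t / (C - u) :=
    (eventually_domain_snd hw).mono fun t ht => psi_eq ht hv
  rw [pd2, hloc.deriv_eq]
  exact ((hasDerivAt_id' s).div_const (C - u)).deriv

theorem pd1_psi_eq (hw : 0 < C - u + s ^ 2) (hv : C - u ≠ 0) :
    pd1 (psi (riemannianPhi C)) u s = s / (C - u) ^ 2 := by
  have hloc : (fun t => psi (riemannianPhi C) t s) =ᶠ[𝓝 u] fun t => s / (C - t) :=
    (eventually_domain_fst hw hv).mono fun t ht => psi_eq ht.1 ht.2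
  rw [pd1, hloc.deriv_eq]
  refine (((hasDerivAt_const u s).div ((hasDerivAt_id' u).const_sub C) hv)).deriv.trans ?_
  field_simp
  ring

theorem projective_pde (hw : 0 < C - u + s ^ 2) (hv : C - u ≠ 0) :
    pd2 (pd2 (riemannianPhi C)) u s =
      2 * (pd1 (riemannianPhi C) u s - s * pd2 (pd1 (riemannianPhi C)) u s) := by
  have hr : 0 < √(C - u + s ^ 2) := Real.sqrt_pos.mpr hw
  have hr2 : √(C - u + s ^ 2) ^ 2 = C - u + s ^ 2 := Real.sq_sqrt hw.le
  rw [pd2_pd2_eq hw hv, pd1_eq hw hv, pd2_pd1_eq hw hv]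
  field_simp
  linear_combination (-(C - u + 2 * s ^ 2)) * hr2

theorem psi_sq_sub_eq_neg_sq (hw : 0 < C - u + s ^ 2) (hv : C - u ≠ 0) :
    psi (riemannianPhi C) u s ^ 2 -
        (pd2 (psi (riemannianPhi C)) u s + 2 * s * pd1 (psi (riemannianPhi C)) u s) =
      -riemannianPhi C u s ^ 2 := by
  rw [psi_eq hw hv, pd2_psi_eq hw hv, pd1_psi_eq hw hv, riemannianPhi,
    div_pow √(C - u + s ^ 2), Real.sq_sqrt hw.le]
  field_simp
  ring

end riemannianPhi

theorem stmt_19_general (κ K : ℝ) (σ : ℝ) (hσdef : σ = K / κ) (hσ : σ < 0)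
    (C : ℝ) (φ : ℝ → ℝ → ℝ)
    (hφ : ∀ u s : ℝ, φ u s = Real.sqrt (-σ⁻¹ * (C - u + s ^ 2)) / (C - u)) :
    ∀ u s : ℝ, 0 < C - u + s ^ 2 → C - u ≠ 0 → 0 < φ u s →
      (pd2 (pd2 φ) u s = 2 * (pd1 φ u s - s * pd2 (pd1 φ) u s)
        ∧ κ * ((psi φ u s) ^ 2 - (pd2 (psi φ) u s + 2 * s * pd1 (psi φ) u s))
          = K * (φ u s) ^ 2) := by
  intro u s hw hv _
  obtain ⟨hK, hκ⟩ := div_ne_zero_iff.mp (hσdef ▸ hσ.ne)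
  have ha : 0 < -σ⁻¹ := neg_pos.mpr (inv_lt_zero.mpr hσ)
  have hφ_eq : φ = fun u s => √(-σ⁻¹) * riemannianPhi C u s := by
    ext u s
    rw [hφ, Real.sqrt_mul ha.le, mul_div_assoc, riemannianPhi]
  subst hφ_eq
  constructor
  · simp only [pd1_const_mul, pd2_const_mul]
    rw [riemannianPhi.projective_pde hw hv]
    ring
  · rw [psi_const_mul (Real.sqrt_pos.mpr ha).ne', riemannianPhi.psi_sq_sub_eq_neg_sq hw hv,
      mul_pow, Real.sq_sqrt ha.le, hσdef]
    field_simp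

/-- The case `D = 0` (Riemannian): `φ(u,s) = √(−σ⁻¹(C−u+s²))/(C−u)` satisfies the
projective PDE `φ₂₂ = 2(φ₁ − s·φ₁₂)` and the Einstein PDE with `μ = 0`:
`κ·[ψ² − (ψ₂ + 2s·ψ₁)] = K·φ²`. -/
theorem stmt_19 (κ K : ℝ) (hκ : 0 < κ) (σ : ℝ) (hσdef : σ = K / κ) (hσ : σ < 0)
    (C : ℝ) (φ : ℝ → ℝ → ℝ)
    (hφ : ∀ u s : ℝ, φ u s = Real.sqrt (-σ⁻¹ * (C - u + s ^ 2)) / (C - u)) :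
    ∀ u s : ℝ, 0 < C - u + s ^ 2 → C - u ≠ 0 → 0 < φ u s →
      (pd2 (pd2 φ) u s = 2 * (pd1 φ u s - s * pd2 (pd1 φ) u s)
        ∧ κ * ((psi φ u s) ^ 2 - (pd2 (psi φ) u s + 2 * s * pd1 (psi φ) u s))
          = K * (φ u s) ^ 2) :=
  stmt_19_general κ K σ hσdef hσ C φ hφ
end
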